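/- The first-order recursive computability ordering >_rco coincides with the recursive path ordering >_rpo: t >_rco u if and only if t >_rpo u. -/
import Mathlib


/-- First-order algebraic terms over symbols `F` and variables `X`. -/
inductive FOTerm (F X : Type) : Type
  | var : X → FOTerm F X
  | app : F → List (FOTerm F X) → FOTerm F X

/-- Statuses: lexicographic or multiset comparison of arguments. -/
inductive Status : Type
  | lex
  | mul

/-- Left-to-right lexicographic extension of a "greater-than" relation. -/
inductive LexExt {α : Type*} (r : α → α → Prop) : List α → List α → Prop
  | head {t u : α} {ts us : List α} : r t u → LexExt r (t :: ts) (u :: us)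
  | tail {t : α} {ts us : List α} : LexExt r ts us → LexExt r (t :: ts) (t :: us)

/-- Multiset extension of a "greater-than" relation. -/
def MulExt {α : Type*} (r : α → α → Prop) (ts us : List α) : Prop :=
  ∃ Z X Y : Multiset α, X ≠ 0 ∧ (ts : Multiset α) = Z + X ∧ (us : Multiset α) = Z + Y ∧
    ∀ y ∈ Y, ∃ x ∈ X, r x y

/-- Extension of a relation to lists of terms according to a status. -/
def statExt {α : Type*} : Status → (α → α → Prop) → List α → List α → Prop
  | Status.lex, r => LexExt r
  | Status.mul, r => MulExt r

/-- Strict part `>_F` of the quasi-order `≥_F`. -/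
def PrecGT {F : Type*} (ge : F → F → Prop) (f g : F) : Prop := ge f g ∧ ¬ ge g f

/-- Equivalence `≃_F` associated with the quasi-order `≥_F`. -/
def PrecEquiv {F : Type*} (ge : F → F → Prop) (f g : F) : Prop := ge f g ∧ ge g f

/-- One step of the computability-closure operator `CR`: given a candidate relation `R`,
`CRStep ge stat R t u` holds iff `t >_rco u` can be derived by one application of
(arg), (prec), (call) or (red) with premises taken in `R`. -/
def CRStep {F X : Type} (ge : F → F → Prop) (stat : F → Status)
    (R : FOTerm F X → FOTerm F X → Prop) (t u : FOTerm F X) : Prop :=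
  -- (arg)
  (∃ f ts, t = FOTerm.app f ts ∧ u ∈ ts) ∨
  -- (prec)
  (∃ f ts g us, t = FOTerm.app f ts ∧ u = FOTerm.app g us ∧ PrecGT ge f g ∧
    ∀ v ∈ us, R t v) ∨
  -- (call)
  (∃ f ts g us, t = FOTerm.app f ts ∧ u = FOTerm.app g us ∧ PrecEquiv ge f g ∧
    (∀ v ∈ us, R t v) ∧ statExt (stat f) R ts us) ∨
  -- (red)
  (∃ f ts v, t = FOTerm.app f ts ∧ R t v ∧ R v u)

/-- The first-order recursive computability ordering `>_rco`:
the least fixpoint of the monotone operator `CRStep`. -/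
def Rco {F X : Type} (ge : F → F → Prop) (stat : F → Status)
    (t u : FOTerm F X) : Prop :=
  ∀ S : FOTerm F X → FOTerm F X → Prop,
    (∀ a b, CRStep ge stat S a b → S a b) → S t u

/-- One step of the recursive-path-ordering operator: given a candidate relation `R`,
`RpoStep ge stat R t u` holds iff `t >_rpo u` can be derived by one application of
the rules (1), (2), (3) with premises taken in `R`. -/
def RpoStep {F X : Type} (ge : F → F → Prop) (stat : F → Status)
    (R : FOTerm F X → FOTerm F X → Prop) (t u : FOTerm F X) : Prop :=
  -- (1)
  (∃ f ts, t = FOTerm.app f ts ∧ ∃ ti ∈ ts, ti = u ∨ R ti u) ∨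
  -- (2)
  (∃ f ts g us, t = FOTerm.app f ts ∧ u = FOTerm.app g us ∧ PrecGT ge f g ∧
    ∀ v ∈ us, R t v) ∨
  -- (3)
  (∃ f ts g us, t = FOTerm.app f ts ∧ u = FOTerm.app g us ∧ PrecEquiv ge f g ∧
    statExt (stat f) R ts us ∧ ∀ v ∈ us, R t v)

/-- The recursive path ordering `>_rpo`: the least fixpoint of `RpoStep`. -/
def Rpo {F X : Type} (ge : F → F → Prop) (stat : F → Status)
    (t u : FOTerm F X) : Prop :=
  ∀ S : FOTerm F X → FOTerm F X → Prop,
    (∀ a b, RpoStep ge stat S a b → S a b) → S t u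

/-! ### Auxiliary material -/

/-- Size of a first-order term. -/
def fsize {F X : Type} : FOTerm F X → ℕ
  | .var _ => 1
  | .app _ ts => 1 + (ts.attach.map (fun x => fsize x.1)).sum
decreasing_by
  have := List.sizeOf_lt_of_mem x.2
  simp_wf
  omega

theorem fsize_pos {F X : Type} (t : FOTerm F X) : 0 < fsize t := by
  cases t <;> simp [fsize]

theorem fsize_lt {F X : Type} {f : F} {ts : List (FOTerm F X)} {x} (hx : x ∈ ts) :
    fsize x < fsize (FOTerm.app f ts) := by
  have hm : fsize x ∈ ts.attach.map (fun x => fsize x.1) :=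
    List.mem_map.mpr ⟨⟨x, hx⟩, List.mem_attach _ _, rfl⟩
  have hle := List.single_le_sum (fun n _ => Nat.zero_le n) _ hm
  simp only [fsize]
  omega

theorem lexExt_mono {α : Type*} {r r' : α → α → Prop} (h : ∀ a b, r a b → r' a b) :
    ∀ {ts us : List α}, LexExt r ts us → LexExt r' ts us := by
  intro ts us hl
  induction hl with
  | head h1 => exact LexExt.head (h _ _ h1)
  | tail _ ih => exact LexExt.tail ih

theorem statExt_mono {α : Type*} (s : Status) {r r' : α → α → Prop}
    (h : ∀ a b, r a b → r' a b) {ts us : List α}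
    (hs : statExt s r ts us) : statExt s r' ts us := by
  cases s with
  | lex => exact lexExt_mono h hs
  | mul =>
    obtain ⟨Z, Xm, Y, hX, h1, h2, h3⟩ := hs
    exact ⟨Z, Xm, Y, hX, h1, h2, fun y hy =>
      (h3 y hy).imp fun x ⟨hx, hr⟩ => ⟨hx, h _ _ hr⟩⟩

theorem rpoStep_mono {F X : Type} (ge : F → F → Prop) (stat : F → Status)
    {R R' : FOTerm F X → FOTerm F X → Prop}
    (h : ∀ a b, R a b → R' a b) {t u} (hs : RpoStep ge stat R t u) :
    RpoStep ge stat R' t u := by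
  rcases hs with ⟨f, ts, ht, ti, hti, hc⟩ | ⟨f, ts, g, us, ht, hu, hp, hall⟩ |
    ⟨f, ts, g, us, ht, hu, hp, hst, hall⟩
  · exact Or.inl ⟨f, ts, ht, ti, hti, hc.imp id (h _ _)⟩
  · exact Or.inr (Or.inl ⟨f, ts, g, us, ht, hu, hp, fun v hv => h _ _ (hall v hv)⟩)
  · exact Or.inr (Or.inr ⟨f, ts, g, us, ht, hu, hp, statExt_mono _ h hst,
      fun v hv => h _ _ (hall v hv)⟩)

theorem crStep_mono {F X : Type} (ge : F → F → Prop) (stat : F → Status)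
    {R R' : FOTerm F X → FOTerm F X → Prop}
    (h : ∀ a b, R a b → R' a b) {t u} (hs : CRStep ge stat R t u) :
    CRStep ge stat R' t u := by
  rcases hs with harg | ⟨f, ts, g, us, ht, hu, hp, hall⟩ |
    ⟨f, ts, g, us, ht, hu, hp, hall, hst⟩ | ⟨f, ts, v, ht, h1, h2⟩
  · exact Or.inl harg
  · exact Or.inr (Or.inl ⟨f, ts, g, us, ht, hu, hp, fun v hv => h _ _ (hall v hv)⟩)
  · exact Or.inr (Or.inr (Or.inl ⟨f, ts, g, us, ht, hu, hp,
      fun v hv => h _ _ (hall v hv), statExt_mono _ h hst⟩))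
  · exact Or.inr (Or.inr (Or.inr ⟨f, ts, v, ht, h _ _ h1, h _ _ h2⟩))

theorem rpo_fold {F X : Type} (ge : F → F → Prop) (stat : F → Status)
    {t u : FOTerm F X} (h : RpoStep ge stat (Rpo ge stat) t u) : Rpo ge stat t u :=
  fun S hS => hS _ _ (rpoStep_mono ge stat (fun a b hab => hab S hS) h)

theorem rpo_unfold {F X : Type} (ge : F → F → Prop) (stat : F → Status)
    {t u : FOTerm F X} (h : Rpo ge stat t u) : RpoStep ge stat (Rpo ge stat) t u :=
  h _ (fun _ _ hs => rpoStep_mono ge stat (fun _ _ h' => rpo_fold ge stat h') hs)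

theorem rco_fold {F X : Type} (ge : F → F → Prop) (stat : F → Status)
    {t u : FOTerm F X} (h : CRStep ge stat (Rco ge stat) t u) : Rco ge stat t u :=
  fun S hS => hS _ _ (crStep_mono ge stat (fun a b hab => hab S hS) h)

theorem lexExt_trans {α : Type*} {r : α → α → Prop} :
    ∀ {ts us vs : List α}, LexExt r ts us → LexExt r us vs →
      (∀ x ∈ ts, ∀ y ∈ us, ∀ z ∈ vs, r x y → r y z → r x z) → LexExt r ts vs := by
  intro ts us vs h1
  induction h1 generalizing vs with
  | @head t u ts' us' h1 =>
    intro h2 htr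
    cases h2 with
    | @head _ v _ vs' hr =>
      exact LexExt.head (htr t (by simp) u (by simp) v (by simp) h1 hr)
    | @tail _ _ vs' h2 => exact LexExt.head h1
  | @tail t ts' us' h1 ih =>
    intro h2 htr
    cases h2 with
    | @head _ v _ vs' hr => exact LexExt.head hr
    | @tail _ _ vs' h2 =>
      exact LexExt.tail (ih h2 (fun x hx y hy z hz =>
        htr x (by simp [hx]) y (by simp [hy]) z (by simp [hz])))

theorem mulExt_trans {α : Type*} {r : α → α → Prop} {ts us vs : List α}
    (h1 : MulExt r ts us) (h2 : MulExt r us vs)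
    (htr : ∀ x ∈ ts, ∀ y ∈ us, ∀ z ∈ vs, r x y → r y z → r x z) :
    MulExt r ts vs := by
  classical
  obtain ⟨Z1, X1, Y1, hX1, hM, hN1, D1⟩ := h1
  obtain ⟨Z2, X2, Y2, hX2, hN2, hP, D2⟩ := h2
  have hcount : ∀ a : α, Multiset.count a Z1 + Multiset.count a Y1 =
      Multiset.count a Z2 + Multiset.count a X2 := by
    intro a
    have := hN1.symm.trans hN2
    have := congrArg (Multiset.count a) this
    simpa [Multiset.count_add] using this
  refine ⟨Z1 ∩ Z2, (Z1 - Z2) + X1, (Z2 - Z1) + Y2, ?_, ?_, ?_, ?_⟩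
  · intro h0
    apply hX1
    have : X1 ≤ (Z1 - Z2) + X1 := Multiset.le_add_left _ _
    rw [h0] at this
    exact Multiset.le_zero.mp this
  · rw [hM]
    ext a
    simp only [Multiset.count_add, Multiset.count_inter, Multiset.count_sub]
    omega
  · rw [hP]
    ext a
    simp only [Multiset.count_add, Multiset.count_inter, Multiset.count_sub]
    omega
  · intro y hy
    -- membership helpers
    have hX1ts : ∀ x ∈ X1, x ∈ ts := by
      intro x hx
      have : x ∈ (ts : Multiset α) := by rw [hM]; exact Multiset.mem_add.mpr (Or.inr hx)
      simpa using this
    have hY1us : ∀ x ∈ Y1, x ∈ us := by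
      intro x hx
      have : x ∈ (us : Multiset α) := by rw [hN1]; exact Multiset.mem_add.mpr (Or.inr hx)
      simpa using this
    have hY2vs : ∀ x ∈ Y2, x ∈ vs := by
      intro x hx
      have : x ∈ (vs : Multiset α) := by rw [hP]; exact Multiset.mem_add.mpr (Or.inr hx)
      simpa using this
    rcases Multiset.mem_add.mp hy with hyZ | hyY2
    · -- y ∈ Z2 - Z1 : then y ∈ Y1 and we dominate it by some x ∈ X1
      have hylt : Multiset.count y Z1 < Multiset.count y Z2 := by
        have := Multiset.count_pos.mpr hyZ
        rw [Multiset.count_sub] at this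
        omega
      have hyY1 : y ∈ Y1 := by
        rw [← Multiset.count_pos]
        have := hcount y
        omega
      obtain ⟨x, hx, hr⟩ := D1 y hyY1
      exact ⟨x, Multiset.mem_add.mpr (Or.inr hx), hr⟩
    · -- y ∈ Y2
      obtain ⟨x2, hx2, hr2⟩ := D2 y hyY2
      by_cases hc : Multiset.count x2 Z2 < Multiset.count x2 Z1
      · -- x2 survives in Z1 - Z2 ⊆ new X
        have : x2 ∈ Z1 - Z2 := by
          rw [← Multiset.count_pos, Multiset.count_sub]; omega
        exact ⟨x2, Multiset.mem_add.mpr (Or.inl this), hr2⟩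
      · -- x2 ∈ Y1, so dominated by some x1 ∈ X1 ; compose by transitivity
        have hx2Y1 : x2 ∈ Y1 := by
          rw [← Multiset.count_pos]
          have h1 := hcount x2
          have h2 := Multiset.count_pos.mpr hx2
          omega
        obtain ⟨x1, hx1, hr1⟩ := D1 x2 hx2Y1
        refine ⟨x1, Multiset.mem_add.mpr (Or.inr hx1), ?_⟩
        exact htr x1 (hX1ts x1 hx1) x2 (hY1us x2 hx2Y1) y (hY2vs y hyY2) hr1 hr2

theorem statExt_trans {α : Type*} (s : Status) {r : α → α → Prop} {ts us vs : List α}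
    (h1 : statExt s r ts us) (h2 : statExt s r us vs)
    (htr : ∀ x ∈ ts, ∀ y ∈ us, ∀ z ∈ vs, r x y → r y z → r x z) :
    statExt s r ts vs := by
  cases s with
  | lex => exact lexExt_trans h1 h2 htr
  | mul => exact mulExt_trans h1 h2 htr

theorem rpo_trans {F X : Type} (ge : F → F → Prop)
    (ge_trans : ∀ f g h, ge f g → ge g h → ge f h)
    (stat : F → Status)
    (stat_compat : ∀ f g, PrecEquiv ge f g → stat f = stat g) :
    ∀ t u v : FOTerm F X, Rpo ge stat t u → Rpo ge stat u v → Rpo ge stat t v := by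
  have main : ∀ n, ∀ t u v : FOTerm F X, fsize t + fsize u + fsize v ≤ n →
      Rpo ge stat t u → Rpo ge stat u v → Rpo ge stat t v := by
    intro n
    induction n with
    | zero =>
      intro t u v hn
      have := fsize_pos t; have := fsize_pos u; have := fsize_pos v
      omega
    | succ n ih =>
      intro t u v hn htu huv
      rcases rpo_unfold ge stat htu with ⟨f, ts, ht, ti, hti, hc⟩ |
        ⟨f, ts, g, us, ht, hu, hfg, hall⟩ | ⟨f, ts, g, us, ht, hu, hfg, hst, hall⟩
      · -- t > u by rule (1)
        subst ht
        have h' : Rpo ge stat ti v := by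
          cases hc with
          | inl e => exact e ▸ huv
          | inr h =>
            exact ih ti u v (by have := fsize_lt (f := f) hti; omega) h huv
        exact rpo_fold ge stat (Or.inl ⟨f, ts, rfl, ti, hti, Or.inr h'⟩)
      · -- t > u by rule (2)
        subst ht; subst hu
        rcases rpo_unfold ge stat huv with ⟨g', us', hu2, uj, huj, hc⟩ |
          ⟨g', us', h', vs, hu2, hv, hgh, hallv⟩ | ⟨g', us', h', vs, hu2, hv, hgh, hst2, hallv⟩
        · -- u > v by rule (1)
          injection hu2 with e1 e2
          subst e1; subst e2
          have htuj : Rpo ge stat (FOTerm.app f ts) uj := hall uj huj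
          cases hc with
          | inl e => exact e ▸ htuj
          | inr h =>
            exact ih _ uj v (by have := fsize_lt (f := g) huj; omega) htuj h
        · -- u > v by rule (2)
          injection hu2 with e1 e2
          subst e1; subst e2; subst hv
          refine rpo_fold ge stat (Or.inr (Or.inl ⟨f, ts, h', vs, rfl, rfl, ?_, ?_⟩))
          · exact ⟨ge_trans f g h' hfg.1 hgh.1,
              fun hhf => hfg.2 (ge_trans g h' f hgh.1 hhf)⟩
          · intro vk hvk
            exact ih _ _ vk (by have := fsize_lt (f := h') hvk; omega) htu (hallv vk hvk)
        · -- u > v by rule (3)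
          injection hu2 with e1 e2
          subst e1; subst e2; subst hv
          refine rpo_fold ge stat (Or.inr (Or.inl ⟨f, ts, h', vs, rfl, rfl, ?_, ?_⟩))
          · exact ⟨ge_trans f g h' hfg.1 hgh.1,
              fun hhf => hfg.2 (ge_trans g h' f hgh.1 hhf)⟩
          · intro vk hvk
            exact ih _ _ vk (by have := fsize_lt (f := h') hvk; omega) htu (hallv vk hvk)
      · -- t > u by rule (3)
        subst ht; subst hu
        rcases rpo_unfold ge stat huv with ⟨g', us', hu2, uj, huj, hc⟩ |
          ⟨g', us', h', vs, hu2, hv, hgh, hallv⟩ | ⟨g', us', h', vs, hu2, hv, hgh, hst2, hallv⟩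
        · -- u > v by rule (1)
          injection hu2 with e1 e2
          subst e1; subst e2
          have htuj : Rpo ge stat (FOTerm.app f ts) uj := hall uj huj
          cases hc with
          | inl e => exact e ▸ htuj
          | inr h =>
            exact ih _ uj v (by have := fsize_lt (f := g) huj; omega) htuj h
        · -- u > v by rule (2)
          injection hu2 with e1 e2
          subst e1; subst e2; subst hv
          refine rpo_fold ge stat (Or.inr (Or.inl ⟨f, ts, h', vs, rfl, rfl, ?_, ?_⟩))
          · exact ⟨ge_trans f g h' hfg.1 hgh.1,
              fun hhf => hgh.2 (ge_trans h' f g hhf hfg.1)⟩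
          · intro vk hvk
            exact ih _ _ vk (by have := fsize_lt (f := h') hvk; omega) htu (hallv vk hvk)
        · -- u > v by rule (3)
          injection hu2 with e1 e2
          subst e1; subst e2; subst hv
          have hfh : PrecEquiv ge f h' :=
            ⟨ge_trans f g h' hfg.1 hgh.1, ge_trans h' g f hgh.2 hfg.2⟩
          have hsfg : stat f = stat g := stat_compat f g hfg
          have hst2' : statExt (stat f) (Rpo ge stat) us vs := by
            rw [hsfg]; exact hst2
          refine rpo_fold ge stat (Or.inr (Or.inr ⟨f, ts, h', vs, rfl, rfl, hfh, ?_, ?_⟩))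
          · refine statExt_trans _ hst hst2' ?_
            intro x hx y hy z hz hxy hyz
            exact ih x y z
              (by
                have h1 := fsize_lt (f := f) hx
                have h2 := fsize_lt (f := g) hy
                have h3 := fsize_lt (f := h') hz
                omega) hxy hyz
          · intro vk hvk
            exact ih _ _ vk (by have := fsize_lt (f := h') hvk; omega) htu (hallv vk hvk)
  intro t u v htu huv
  exact main (fsize t + fsize u + fsize v) t u v le_rfl htu huv

/-- The first-order recursive computability ordering coincides with the
recursive path ordering: `t >_rco u` iff `t >_rpo u`. -/
theorem rco_eq_rpo {F X : Type} (ge : F → F → Prop)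
    (ge_refl : ∀ f, ge f f)
    (ge_trans : ∀ f g h, ge f g → ge g h → ge f h)
    (prec_wf : WellFounded (fun f g => PrecGT ge g f))
    (stat : F → Status)
    (stat_compat : ∀ f g, PrecEquiv ge f g → stat f = stat g) :
    ∀ t u : FOTerm F X, Rco ge stat t u ↔ Rpo ge stat t u := by
  intro t u
  constructor
  · intro h
    refine h (Rpo ge stat) ?_
    intro a b hs
    rcases hs with ⟨f, ts, ht, hu⟩ | ⟨f, ts, g, us, ht, hu, hp, hall⟩ |
      ⟨f, ts, g, us, ht, hu, hp, hall, hst⟩ | ⟨f, ts, v, ht, h1, h2⟩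
    · exact rpo_fold ge stat (Or.inl ⟨f, ts, ht, b, hu, Or.inl rfl⟩)
    · exact rpo_fold ge stat (Or.inr (Or.inl ⟨f, ts, g, us, ht, hu, hp, hall⟩))
    · exact rpo_fold ge stat (Or.inr (Or.inr ⟨f, ts, g, us, ht, hu, hp, hst, hall⟩))
    · exact rpo_trans ge ge_trans stat stat_compat a v b h1 h2
  · intro h
    refine h (Rco ge stat) ?_
    intro a b hs
    rcases hs with ⟨f, ts, ht, ti, hti, hc⟩ | ⟨f, ts, g, us, ht, hu, hp, hall⟩ |
      ⟨f, ts, g, us, ht, hu, hp, hst, hall⟩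
    · cases hc with
      | inl e => exact rco_fold ge stat (Or.inl ⟨f, ts, ht, e ▸ hti⟩)
      | inr hR =>
        have h1 : Rco ge stat a ti := rco_fold ge stat (Or.inl ⟨f, ts, ht, hti⟩)
        exact rco_fold ge stat (Or.inr (Or.inr (Or.inr ⟨f, ts, ti, ht, h1, hR⟩)))
    · exact rco_fold ge stat (Or.inr (Or.inl ⟨f, ts, g, us, ht, hu, hp, hall⟩))
    · exact rco_fold ge stat (Or.inr (Or.inr (Or.inl ⟨f, ts, g, us, ht, hu, hp, hall, hst⟩)))
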